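/- Key inequality: if w : M → ℝ is a continuous subsolution (w ≤ T(w), critical value 0), and x̄^λ = (x^λ_{-n}) is a minimizing sequence for u_λ(x^λ_0), then u_λ(x^λ_0) ≥ w(x^λ_0) − ∫_{M×M} w(x) dμ̃^λ_{x̄^λ}(x,y). -/

import Mathlib

/-!
Along the minimizing chain the subsolution inequality gives
`w (p n) - w (p (n + 1)) ≤ c (p (n + 1), p n)`. Summing with weights `λⁿ` bounds `u (p 0)` from
below by `∑ λⁿ (w (p n) - w (p (n + 1)))`, and an Abel summation turns this into
`w (p 0) - (1 - λ) ∑ λⁿ w (p (n + 1))`, whose second term is the integral of `w ∘ fst` against the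
discounted occupation measure.
-/

open MeasureTheory

/-- The discounted occupation measure `μ̃^λ_{x̄} = (1-λ) ∑ λⁿ δ_{(x_{-n-1}, x_{-n})}`. -/
noncomputable def discountedOccupation {M : Type*} [MeasurableSpace M]
    (lam : ℝ) (p : ℕ → M) : Measure (M × M) :=
  Measure.sum fun n : ℕ =>
    (ENNReal.ofReal ((1 - lam) * lam ^ n)) • Measure.dirac (p (n + 1), p n)

section GeometricSums

variable {lam C : ℝ} {a : ℕ → ℝ}

lemma summable_pow_mul_of_abs_le (h0 : 0 ≤ lam) (h1 : lam < 1) (ha : ∀ n, |a n| ≤ C) :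
    Summable fun n => lam ^ n * a n := by
  refine .of_norm_bounded ((summable_geometric_of_lt_one h0 h1).mul_right C) fun n => ?_
  rw [norm_mul, norm_pow, Real.norm_eq_abs, Real.norm_eq_abs, abs_of_nonneg h0]
  exact mul_le_mul_of_nonneg_left (ha n) (pow_nonneg h0 n)

lemma tsum_pow_mul_sub_succ (h0 : 0 ≤ lam) (h1 : lam < 1) (ha : ∀ n, |a n| ≤ C) :
    ∑' n, lam ^ n * (a n - a (n + 1)) = a 0 - (1 - lam) * ∑' n, lam ^ n * a (n + 1) := by
  have hsum := summable_pow_mul_of_abs_le h0 h1 ha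
  have hsum_succ := summable_pow_mul_of_abs_le h0 h1 fun n => ha (n + 1)
  have hshift : ∑' n, lam ^ n * a n = a 0 + lam * ∑' n, lam ^ n * a (n + 1) := by
    rw [hsum.tsum_eq_zero_add, ← tsum_mul_left]
    simp only [pow_succ, pow_zero, one_mul, mul_comm _ lam, mul_assoc]
  simp only [mul_sub]
  rw [hsum.tsum_sub hsum_succ, hshift]
  ring

end GeometricSums

section DiscountedOccupation

variable {M : Type*} [MeasurableSpace M] {lam : ℝ}

lemma isProbabilityMeasure_discountedOccupation (h0 : 0 ≤ lam) (h1 : lam < 1) (p : ℕ → M) :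
    IsProbabilityMeasure (discountedOccupation lam p) := by
  have hweight : ∀ n : ℕ, 0 ≤ (1 - lam) * lam ^ n := fun n =>
    mul_nonneg (by linarith) (pow_nonneg h0 n)
  constructor
  rw [discountedOccupation, Measure.sum_apply _ MeasurableSet.univ]
  simp only [Measure.smul_apply, measure_univ, smul_eq_mul, mul_one]
  rw [← ENNReal.ofReal_tsum_of_nonneg hweight
      ((summable_geometric_of_lt_one h0 h1).mul_left _),
    tsum_mul_left, tsum_geometric_of_lt_one h0 h1, mul_inv_cancel₀ (by linarith),
    ENNReal.ofReal_one]

lemma integral_discountedOccupation [MeasurableSingletonClass M] (h0 : 0 ≤ lam) (h1 : lam < 1)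
    (p : ℕ → M)
    {f : M × M → ℝ} (hf : AEStronglyMeasurable f (discountedOccupation lam p)) {C : ℝ}
    (hC : ∀ z, |f z| ≤ C) :
    ∫ z, f z ∂(discountedOccupation lam p) = (1 - lam) * ∑' n, lam ^ n * f (p (n + 1), p n) := by
  have := isProbabilityMeasure_discountedOccupation h0 h1 p
  have hint : Integrable f (discountedOccupation lam p) :=
    .of_bound hf C (ae_of_all _ hC)
  rw [discountedOccupation] at hint ⊢
  rw [integral_sum_measure hint, ← tsum_mul_left]
  congr 1 with n
  rw [integral_smul_measure, integral_dirac,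
    ENNReal.toReal_ofReal (mul_nonneg (by linarith) (pow_nonneg h0 n)), smul_eq_mul, mul_assoc]

end DiscountedOccupation

lemma sub_le_of_le_iInf_add {X : Type*} [TopologicalSpace X] [CompactSpace X]
    {w : X → ℝ} (hw : Continuous w) {c : X × X → ℝ} (hc : Continuous c) {x : X}
    (hx : w x ≤ ⨅ y, (w y + c (y, x))) (y : X) : w x - w y ≤ c (y, x) := by
  have hbdd : BddBelow (Set.range fun y => w y + c (y, x)) :=
    (isCompact_range (by fun_prop)).bddBelow
  linarith [hx.trans (ciInf_le hbdd y)]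

theorem key_inequality_subsolution_general
    {M : Type*} [MetricSpace M] [CompactSpace M]
    [MeasurableSpace M] [BorelSpace M]
    (c : M × M → ℝ) (hc : Continuous c)
    (w : C(M, ℝ)) (hw : ∀ x : M, w x ≤ ⨅ y : M, (w y + c (y, x)))
    (lam : ℝ) (hlam0 : 0 < lam) (hlam1 : lam < 1)
    (u : C(M, ℝ))
    (p : ℕ → M)
    (hmin : u (p 0) = ∑' n : ℕ, lam ^ n * c (p (n + 1), p n)) :
    u (p 0) ≥ w (p 0) - ∫ z : M × M, w z.1 ∂(discountedOccupation lam p) := by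
  have hCw : ∀ x, |w x| ≤ ‖w‖ := w.norm_coe_le_norm
  have hCc : ∀ z, |c z| ≤ ‖ContinuousMap.mk c hc‖ := (ContinuousMap.mk c hc).norm_coe_le_norm
  have hintegral : ∫ z : M × M, w z.1 ∂(discountedOccupation lam p)
      = (1 - lam) * ∑' n, lam ^ n * w (p (n + 1)) :=
    integral_discountedOccupation hlam0.le hlam1 p
      (w.continuous.comp continuous_fst).aestronglyMeasurable fun z => hCw z.1
  calc w (p 0) - ∫ z : M × M, w z.1 ∂(discountedOccupation lam p)
      = ∑' n, lam ^ n * (w (p n) - w (p (n + 1))) := by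
        rw [hintegral, tsum_pow_mul_sub_succ hlam0.le hlam1 fun n => hCw (p n)]
    _ ≤ ∑' n, lam ^ n * c (p (n + 1), p n) := by
        refine Summable.tsum_le_tsum (fun n => ?_)
          (summable_pow_mul_of_abs_le hlam0.le hlam1 fun n =>
            (abs_sub _ _).trans (add_le_add (hCw (p n)) (hCw (p (n + 1)))))
          (summable_pow_mul_of_abs_le hlam0.le hlam1 fun n => hCc _)
        exact mul_le_mul_of_nonneg_left (sub_le_of_le_iInf_add w.continuous hc (hw _) _)
          (pow_nonneg hlam0.le n)
    _ = u (p 0) := hmin.symm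

/-- Key inequality: if `w` is a continuous subsolution of the critical equation
(critical value `0`) and `x̄^λ` is a minimizing backward sequence for `u_λ(x^λ_0)`,
then `u_λ(x^λ_0) ≥ w(x^λ_0) - ∫ w(x) dμ̃^λ_{x̄^λ}(x, y)`. -/
theorem key_inequality_subsolution
    {M : Type*} [MetricSpace M] [CompactSpace M] [Nonempty M]
    [MeasurableSpace M] [BorelSpace M]
    (c : M × M → ℝ) (hc : Continuous c)
    (hcrit : ∃ v : C(M, ℝ), ∀ x : M, v x = ⨅ y : M, (v y + c (y, x)))
    (w : C(M, ℝ)) (hw : ∀ x : M, w x ≤ ⨅ y : M, (w y + c (y, x)))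
    (lam : ℝ) (hlam0 : 0 < lam) (hlam1 : lam < 1)
    (u : C(M, ℝ))
    (hu : ∀ x : M, u x = ⨅ y : M, (lam * u y + c (y, x)))
    (p : ℕ → M)
    (hmin : u (p 0) = ∑' n : ℕ, lam ^ n * c (p (n + 1), p n))
    (hminimal : ∀ q : ℕ → M, q 0 = p 0 →
      u (p 0) ≤ ∑' n : ℕ, lam ^ n * c (q (n + 1), q n)) :
    u (p 0) ≥ w (p 0) - ∫ z : M × M, w z.1 ∂(discountedOccupation lam p) :=
  key_inequality_subsolution_general c hc w hw lam hlam0 hlam1 u p hmin
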